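/- arXiv:1006.3891 — 3 statements merged into one kernel-verified Lean document; each statement's English description precedes it below -/
import Mathlib

section
/- Let u : ℝ × ℝ³ → ℝ³ be continuously differentiable, θ : ℝ × ℝ³ → ℝ twice continuously differentiable, ω_rot : ℝ × ℝ³ → ℝ³ continuously differentiable, and a₀ ∈ ℝ. Suppose Dθ/Dt = 0 and the vorticity equation Dω_rot/Dt = (ω_rot·∇)u − a₀ ∇⊥θ holds everywhere, where ∇⊥θ := (∂θ/∂y, −∂θ/∂x, 0). Then the potential vorticity q := ω_rot·∇θ is a material constant: Dq/Dt = 0 everywhere. -/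
open scoped BigOperators

noncomputable section

/-- Points of space-time: `(t, x)` with `x : Fin 3 → ℝ`. -/
abbrev Pt := ℝ × (Fin 3 → ℝ)

/-- Spatial partial derivative in the `j`-th coordinate direction. -/
noncomputable def pd {E : Type*} [NormedAddCommGroup E] [NormedSpace ℝ E]
    (F : Pt → E) (j : Fin 3) (p : Pt) : E :=
  fderiv ℝ F p (0, Pi.single j 1)

/-- Partial time derivative. -/
noncomputable def pt {E : Type*} [NormedAddCommGroup E] [NormedSpace ℝ E]
    (F : Pt → E) (p : Pt) : E :=
  fderiv ℝ F p (1, 0)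

/-- Material derivative `DF/Dt = ∂F/∂t + (u·∇)F`. -/
noncomputable def matD {E : Type*} [NormedAddCommGroup E] [NormedSpace ℝ E]
    (u : Pt → Fin 3 → ℝ) (F : Pt → E) (p : Pt) : E :=
  pt F p + ∑ j, u p j • pd F j p

/-- Spatial gradient of a scalar field. -/
noncomputable def grad (f : Pt → ℝ) (p : Pt) : Fin 3 → ℝ := fun j => pd f j p

/-- `(B·∇)u`, with `i`-th component `∑ j, B j * ∂u_i/∂x_j`. -/
noncomputable def vecAdv (B u : Pt → Fin 3 → ℝ) (p : Pt) : Fin 3 → ℝ :=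
  ∑ j, B p j • pd u j p

/-- Euclidean dot product on `ℝ³`. -/
noncomputable def dot3 (a b : Fin 3 → ℝ) : ℝ := ∑ i, a i * b i

/-- Spatial divergence `div u = ∑ j, ∂u_j/∂x_j`. -/
noncomputable def div3 (u : Pt → Fin 3 → ℝ) (p : Pt) : ℝ := ∑ j, pd u j p j

/-- Spatial curl of a vector field. -/
noncomputable def curl3 (v : Pt → Fin 3 → ℝ) (p : Pt) : Fin 3 → ℝ :=
  ![pd v 1 p 2 - pd v 2 p 1, pd v 2 p 0 - pd v 0 p 2, pd v 0 p 1 - pd v 1 p 0]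

/-- `∇⊥θ := (∂θ/∂y, −∂θ/∂x, 0)`. -/
noncomputable def perpGrad (θ : Pt → ℝ) (p : Pt) : Fin 3 → ℝ :=
  ![pd θ 1 p, -pd θ 0 p, 0]

/-!
The material derivative is a single Fréchet derivative, `DF/Dt = DF(t, x) (1, u)`, so it obeys
the product rule: `Dq/Dt = Dω/Dt · ∇θ + ω · D(∇θ)/Dt`. Differentiating `Dθ/Dt = 0` in
`x_j` and using the symmetry of the second derivative of `θ` gives `D(∂_jθ)/Dt = -∂_j u · ∇θ`.
Paired with `ω`, this cancels the stretching term `((ω·∇)u) · ∇θ`, while `∇⊥θ · ∇θ = 0` removes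
the `a₀` term.
-/

theorem fderiv_apply_eq_pt_add_pd {E : Type*} [NormedAddCommGroup E] [NormedSpace ℝ E]
    (F : Pt → E) (p : Pt) (t : ℝ) (x : Fin 3 → ℝ) :
    fderiv ℝ F p (t, x) = t • pt F p + ∑ j, x j • pd F j p := by
  have hx : ((t, x) : Pt) = t • (1, 0) + ∑ j, x j • (0, Pi.single j 1) := by
    ext
    · simp [Prod.fst_sum]
    · simp [Prod.snd_sum, ← pi_eq_sum_univ' x]
  rw [hx, map_add, map_smul, map_sum]
  simp only [map_smul, pt, pd]

theorem matD_eq_fderiv_apply {E : Type*} [NormedAddCommGroup E] [NormedSpace ℝ E]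
    (u : Pt → Fin 3 → ℝ) (F : Pt → E) (p : Pt) : matD u F p = fderiv ℝ F p (1, u p) := by
  rw [fderiv_apply_eq_pt_add_pd, one_smul, matD]

theorem fderiv_apply_zero_eq_dot3_grad (f : Pt → ℝ) (p : Pt) (x : Fin 3 → ℝ) :
    fderiv ℝ f p (0, x) = dot3 x (grad f p) := by
  simp [fderiv_apply_eq_pt_add_pd, dot3, grad]

theorem fderiv_dot3_apply {E : Type*} [NormedAddCommGroup E] [NormedSpace ℝ E]
    {F G : E → Fin 3 → ℝ} {p : E} (hF : DifferentiableAt ℝ F p) (hG : DifferentiableAt ℝ G p)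
    (v : E) :
    fderiv ℝ (fun q => dot3 (F q) (G q)) p v
      = dot3 (fderiv ℝ F p v) (G p) + dot3 (F p) (fderiv ℝ G p v) := by
  have hFi : ∀ i, DifferentiableAt ℝ (fun q => F q i) p := fun i => differentiableAt_pi.1 hF i
  have hGi : ∀ i, DifferentiableAt ℝ (fun q => G q i) p := fun i => differentiableAt_pi.1 hG i
  simp only [dot3]
  rw [fderiv_fun_sum fun i _ => (hFi i).fun_mul (hGi i), _root_.sum_apply,
    ← Finset.sum_add_distrib]
  refine Finset.sum_congr rfl fun i _ => ?_
  rw [fderiv_fun_mul (hFi i) (hGi i), fderiv_apply hF, fderiv_apply hG]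
  simp only [add_apply, smul_apply, ContinuousLinearMap.comp_apply,
    ContinuousLinearMap.proj_apply, smul_eq_mul]
  ring

theorem matD_dot3 {u F G : Pt → Fin 3 → ℝ} {p : Pt} (hF : DifferentiableAt ℝ F p)
    (hG : DifferentiableAt ℝ G p) :
    matD u (fun q => dot3 (F q) (G q)) p = dot3 (matD u F p) (G p) + dot3 (F p) (matD u G p) := by
  simp only [matD_eq_fderiv_apply, fderiv_dot3_apply hF hG]

theorem fderiv_fderiv_apply_const {E : Type*} [NormedAddCommGroup E] [NormedSpace ℝ E]
    {f : E → ℝ} {p : E} (hf : DifferentiableAt ℝ (fderiv ℝ f) p) (v w : E) :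
    fderiv ℝ (fun q => fderiv ℝ f q v) p w = fderiv ℝ (fderiv ℝ f) p w v := by
  simp [fderiv_clm_apply hf (differentiableAt_const v)]

theorem differentiableAt_fderiv_of_contDiffAt_two {E : Type*} [NormedAddCommGroup E]
    [NormedSpace ℝ E] {f : E → ℝ} {p : E} (hf : ContDiffAt ℝ 2 f p) :
    DifferentiableAt ℝ (fderiv ℝ f) p :=
  (hf.fderiv_right (m := 1) le_rfl).differentiableAt one_ne_zero

theorem differentiableAt_grad {θ : Pt → ℝ} {p : Pt} (hθ : ContDiffAt ℝ 2 θ p) :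
    DifferentiableAt ℝ (grad θ) p :=
  differentiableAt_pi.2 fun _ =>
    (differentiableAt_fderiv_of_contDiffAt_two hθ).clm_apply (differentiableAt_const _)

theorem matD_grad {u : Pt → Fin 3 → ℝ} {θ : Pt → ℝ} {p : Pt} (hu : DifferentiableAt ℝ u p)
    (hθ : ContDiffAt ℝ 2 θ p) :
    matD u (grad θ) p = grad (matD u θ) p - fun j => dot3 (pd u j p) (grad θ p) := by
  have hθ' := differentiableAt_fderiv_of_contDiffAt_two hθ
  have hV : HasFDerivAt (fun q => ((1 : ℝ), u q)) ((0 : Pt →L[ℝ] ℝ).prod (fderiv ℝ u p)) p :=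
    (hasFDerivAt_const _ _).prodMk hu.hasFDerivAt
  funext j
  have hL : matD u (grad θ) p j = fderiv ℝ (fderiv ℝ θ) p (1, u p) (0, Pi.single j 1) := by
    rw [matD_eq_fderiv_apply, ← fderiv_fderiv_apply_const hθ']
    exact (congrArg (· (1, u p)) (fderiv_apply (differentiableAt_grad hθ) j)).symm
  have hR : grad (matD u θ) p j
      = dot3 (pd u j p) (grad θ p) + fderiv ℝ (fderiv ℝ θ) p (0, Pi.single j 1) (1, u p) := by
    rw [grad, pd, funext (matD_eq_fderiv_apply u θ), fderiv_clm_apply hθ' hV.differentiableAt,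
      hV.fderiv]
    simp [fderiv_apply_zero_eq_dot3_grad, pd]
  rw [Pi.sub_apply, hL, hR, hθ.isSymmSndFDerivAt (by simp)]
  ring

theorem dot3_eq_dotProduct (a b : Fin 3 → ℝ) : dot3 a b = a ⬝ᵥ b := rfl

theorem dot3_perpGrad_grad (θ : Pt → ℝ) (p : Pt) : dot3 (perpGrad θ p) (grad θ p) = 0 := by
  simp only [dot3, perpGrad, grad, Fin.sum_univ_three, Matrix.cons_val_zero, Matrix.cons_val_one,
    Matrix.cons_val, zero_mul, add_zero]
  ring

theorem dot3_vecAdv (B u : Pt → Fin 3 → ℝ) (p : Pt) (g : Fin 3 → ℝ) :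
    dot3 (vecAdv B u p) g = dot3 (B p) (fun j => dot3 (pd u j p) g) := by
  simp only [dot3, vecAdv, Finset.sum_apply, Pi.smul_apply, smul_eq_mul, Finset.sum_mul,
    Finset.mul_sum, mul_assoc]
  exact Finset.sum_comm

/-- If `Dθ/Dt = 0` and `Dω_rot/Dt = (ω_rot·∇)u − a₀ ∇⊥θ` hold everywhere, then the
potential vorticity `q := ω_rot·∇θ` is a material constant: `Dq/Dt = 0` everywhere. -/
theorem potential_vorticity_material_constant
    (u ωrot : Pt → Fin 3 → ℝ) (θ : Pt → ℝ) (a₀ : ℝ)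
    (hu : ContDiff ℝ 1 u) (hω : ContDiff ℝ 1 ωrot) (hθ : ContDiff ℝ 2 θ)
    (hθeq : ∀ p, matD u θ p = 0)
    (hωeq : ∀ p, matD u ωrot p = vecAdv ωrot u p - a₀ • perpGrad θ p)
    (p : Pt) :
    matD u (fun q => dot3 (ωrot q) (grad θ q)) p = 0 := by
  have hDθ : matD u θ = 0 := funext hθeq
  have hgrad_zero : grad (0 : Pt → ℝ) p = 0 := by
    funext j
    simp [grad, pd]
  rw [matD_dot3 (hω.differentiable one_ne_zero p) (differentiableAt_grad hθ.contDiffAt), hωeq,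
    matD_grad (hu.differentiable one_ne_zero p) hθ.contDiffAt, hDθ, hgrad_zero, zero_sub]
  have hvec := dot3_vecAdv ωrot u p (grad θ p)
  have hperp := dot3_perpGrad_grad θ p
  simp only [dot3_eq_dotProduct] at hvec hperp ⊢
  rw [sub_dotProduct, smul_dotProduct, hvec, hperp, dotProduct_neg, smul_zero, sub_zero, add_neg_cancel]
end
end

section
/- Let u : ℝ × ℝ³ → ℝ³ be twice continuously differentiable and B : ℝ × ℝ³ → ℝ³ continuously differentiable, and suppose DB/Dt = (B·∇)u everywhere. Then D((B·∇)u)/Dt = (B·∇)(Du/Dt) everywhere (Ohkitani-type relation: the material derivative commutes with the operator B·∇ applied to u). -/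
open scoped BigOperators

noncomputable section

/-!
Read on space-time, `D/Dt` is differentiation along the vector field `V = (1, u)` and `B·∇`
is differentiation along `W = (0, B)`. The hypothesis `DB/Dt = (B·∇)u` says exactly that the
Lie bracket `[V, W] = (0, DB/Dt - (B·∇)u)` vanishes, and for a `C²` field `u` the commutator of
the two directional derivatives applied to `u` is the derivative of `u` along `[V, W]`
(symmetry of the second derivative).
-/

open VectorField

section SpaceTime

variable {E : Type*} [NormedAddCommGroup E] [NormedSpace ℝ E]

lemma fderiv_apply_zero_prod (F : Pt → E) (p : Pt) (v : Fin 3 → ℝ) :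
    fderiv ℝ F p (0, v) = ∑ j, v j • pd F j p := by
  have hv : ((0, v) : Pt) = ∑ j, v j • ((0, Pi.single j 1) : Pt) := by
    ext i
    · simp [Prod.fst_sum]
    · simp [Prod.snd_sum, Finset.sum_apply, Pi.single_apply]
  simp only [hv, map_sum, map_smul, pd]

lemma matD_eq_fderiv (u : Pt → Fin 3 → ℝ) (F : Pt → E) (p : Pt) :
    matD u F p = fderiv ℝ F p (1, u p) := by
  have hv : ((1, u p) : Pt) = (1, 0) + (0, u p) := by simp
  rw [hv, map_add, fderiv_apply_zero_prod, matD, pt]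

lemma vecAdv_eq_fderiv (B u : Pt → Fin 3 → ℝ) (p : Pt) :
    vecAdv B u p = fderiv ℝ u p (0, B p) :=
  (fderiv_apply_zero_prod u p (B p)).symm

end SpaceTime

lemma lieBracket_prodMk_one_prodMk_zero {u B : Pt → Fin 3 → ℝ} {p : Pt}
    (hu : DifferentiableAt ℝ u p) (hB : DifferentiableAt ℝ B p) :
    lieBracket ℝ (fun q => ((1 : ℝ), u q)) (fun q => ((0 : ℝ), B q)) p
      = (0, matD u B p - vecAdv B u p) := by
  simp only [lieBracket_eq]
  rw [(differentiableAt_const _).fderiv_prodMk hu,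
    (differentiableAt_const _).fderiv_prodMk hB, matD_eq_fderiv, vecAdv_eq_fderiv]
  simp

/-- **Ohkitani-type relation.** If `DB/Dt = (B·∇)u` everywhere, then
`D((B·∇)u)/Dt = (B·∇)(Du/Dt)` everywhere: the material derivative commutes with
the operator `B·∇` applied to `u`. -/
theorem ohkitani_relation
    (u B : Pt → Fin 3 → ℝ)
    (hu : ContDiff ℝ 2 u) (hB : ContDiff ℝ 1 B)
    (hBeq : ∀ p, matD u B p = vecAdv B u p)
    (p : Pt) :
    matD u (fun q => vecAdv B u q) p = vecAdv B (fun q => matD u u q) p := by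
  have hud : Differentiable ℝ u := hu.differentiable two_ne_zero
  have hBd : Differentiable ℝ B := hB.differentiable one_ne_zero
  have hcomm := fderiv_apply_lieBracket (V := fun q => ((1 : ℝ), u q))
    (W := fun q => ((0 : ℝ), B q)) hu.contDiffAt minSmoothness_of_isRCLikeNormedField.le
    ((differentiableAt_const _).prodMk (hBd p)) ((differentiableAt_const _).prodMk (hud p))
  rw [lieBracket_prodMk_one_prodMk_zero (hud p) (hBd p), hBeq, sub_self, Prod.mk_zero_zero,
    map_zero, eq_comm, sub_eq_zero] at hcomm
  simp only [matD_eq_fderiv, vecAdv_eq_fderiv]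
  exact hcomm
end
end

section
/- (Alignment dynamics, first frame equation.) Let B : ℝ → ℝ³ be twice differentiable with B(t) ≠ 0, set a := Ḃ, b := B̈, B̂ := B/|B|, χ_a := |B|⁻¹(B̂ × a), χ_b := |B|⁻¹(B̂ × b), and assume χ_a(t) ≠ 0 for all t. Define χ̂_a := χ_a/|χ_a|, c_b := B̂·(χ̂_a × χ_b), and the Darboux angular velocity vector D_a := χ_a + (c_b/|χ_a|) B̂. Then (d/dt) B̂ = D_a × B̂ for all t. -/
open scoped BigOperators

noncomputable section

/-- Euclidean norm on `ℝ³`. -/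
noncomputable def norm3 (a : Fin 3 → ℝ) : ℝ := Real.sqrt (∑ i, a i ^ 2)

/-- Cross product on `ℝ³`. -/
noncomputable def cross3 (a b : Fin 3 → ℝ) : Fin 3 → ℝ := crossProduct a b

/-- The unit vector `B̂ := B/|B|` along a curve `B : ℝ → ℝ³`. -/
noncomputable def Bhat (B : ℝ → Fin 3 → ℝ) (t : ℝ) : Fin 3 → ℝ :=
  (norm3 (B t))⁻¹ • B t

/-- The growth rate `α_a := |B|⁻¹ (B̂·Ḃ)`. -/
noncomputable def αa (B : ℝ → Fin 3 → ℝ) (t : ℝ) : ℝ :=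
  (norm3 (B t))⁻¹ * dot3 (Bhat B t) (deriv B t)

/-- The swing rate `χ_a := |B|⁻¹ (B̂ × Ḃ)`. -/
noncomputable def χa (B : ℝ → Fin 3 → ℝ) (t : ℝ) : Fin 3 → ℝ :=
  (norm3 (B t))⁻¹ • cross3 (Bhat B t) (deriv B t)

/-- `α_b := |B|⁻¹ (B̂·B̈)`. -/
noncomputable def αb (B : ℝ → Fin 3 → ℝ) (t : ℝ) : ℝ :=
  (norm3 (B t))⁻¹ * dot3 (Bhat B t) (deriv (deriv B) t)

/-- `χ_b := |B|⁻¹ (B̂ × B̈)`. -/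
noncomputable def χb (B : ℝ → Fin 3 → ℝ) (t : ℝ) : Fin 3 → ℝ :=
  (norm3 (B t))⁻¹ • cross3 (Bhat B t) (deriv (deriv B) t)

/-- The unit vector `χ̂_a := χ_a/|χ_a|`. -/
noncomputable def χahat (B : ℝ → Fin 3 → ℝ) (t : ℝ) : Fin 3 → ℝ :=
  (norm3 (χa B t))⁻¹ • χa B t

/-- `c_b := B̂·(χ̂_a × χ_b)`. -/
noncomputable def cb (B : ℝ → Fin 3 → ℝ) (t : ℝ) : ℝ :=
  dot3 (Bhat B t) (cross3 (χahat B t) (χb B t))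

/-- The Darboux angular velocity vector `D_a := χ_a + (c_b/|χ_a|) B̂`. -/
noncomputable def Da (B : ℝ → Fin 3 → ℝ) (t : ℝ) : Fin 3 → ℝ :=
  χa B t + (cb B t * (norm3 (χa B t))⁻¹) • Bhat B t

/-! The derivative of `B̂` is the part of `Ḃ/|B|` orthogonal to `B̂`, namely `|B|⁻¹ (Ḃ - (B̂·Ḃ) B̂)`.
By the vector triple product this is `(|B|⁻¹ (B̂ × Ḃ)) × B̂ = χ_a × B̂`, and the `B̂`-component
of `D_a` drops out of `D_a × B̂`. -/

open Matrix

lemma dotProduct_self_pos {ι : Type*} [Fintype ι] {u : ι → ℝ} (hu : u ≠ 0) : 0 < u ⬝ᵥ u := by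
  simpa using dotProduct_self_star_pos_iff.mpr hu

lemma norm3_eq_sqrt_dotProduct (u : Fin 3 → ℝ) : norm3 u = √(u ⬝ᵥ u) := by
  simp only [norm3, dotProduct, sq]

lemma norm3_sq (u : Fin 3 → ℝ) : norm3 u ^ 2 = u ⬝ᵥ u := by
  rw [norm3_eq_sqrt_dotProduct, Real.sq_sqrt (by simpa using dotProduct_self_star_nonneg u)]

lemma norm3_pos {u : Fin 3 → ℝ} (hu : u ≠ 0) : 0 < norm3 u := by
  rw [norm3_eq_sqrt_dotProduct, Real.sqrt_pos]
  exact dotProduct_self_pos hu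

lemma HasDerivAt.dotProduct_self {ι : Type*} [Fintype ι] {f : ℝ → ι → ℝ} {f' : ι → ℝ}
    {t : ℝ} (hf : HasDerivAt f f' t) :
    HasDerivAt (fun s => f s ⬝ᵥ f s) (2 * (f t ⬝ᵥ f')) t := by
  have hfi := hasDerivAt_pi.mp hf
  simp only [dotProduct, Finset.mul_sum]
  refine HasDerivAt.fun_sum fun i _ => ?_
  exact ((hfi i).fun_mul (hfi i)).congr_deriv (by ring)

lemma hasDerivAt_norm3 {f : ℝ → Fin 3 → ℝ} {f' : Fin 3 → ℝ} {t : ℝ}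
    (hf : HasDerivAt f f' t) (ht : f t ≠ 0) :
    HasDerivAt (fun s => norm3 (f s)) (f t ⬝ᵥ f' / norm3 (f t)) t := by
  simp only [norm3_eq_sqrt_dotProduct]
  refine (hf.dotProduct_self.sqrt (dotProduct_self_pos ht).ne').congr_deriv ?_
  field_simp

lemma hasDerivAt_inv_norm3_smul {f : ℝ → Fin 3 → ℝ} {f' : Fin 3 → ℝ} {t : ℝ}
    (hf : HasDerivAt f f' t) (ht : f t ≠ 0) :
    HasDerivAt (fun s => (norm3 (f s))⁻¹ • f s)
      ((norm3 (f t))⁻¹ • (f' - ((norm3 (f t))⁻¹ • f t ⬝ᵥ f') • (norm3 (f t))⁻¹ • f t)) t := by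
  have hn := (norm3_pos ht).ne'
  refine (((hasDerivAt_norm3 hf ht).inv hn).smul hf).congr_deriv ?_
  rw [Pi.inv_apply, smul_sub, smul_dotProduct, smul_smul, smul_smul, sub_eq_add_neg, ← neg_smul]
  congr 2
  rw [smul_eq_mul]
  field_simp

lemma cross_cross_self_of_dotProduct_self_eq_one {u : Fin 3 → ℝ} (hu : u ⬝ᵥ u = 1)
    (v : Fin 3 → ℝ) : u ⨯₃ v ⨯₃ u = v - (u ⬝ᵥ v) • u := by
  rw [cross_cross_eq_smul_sub_smul, hu, one_smul, dotProduct_comm]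

lemma cross_add_smul_self (u v : Fin 3 → ℝ) (r : ℝ) : (u + r • v) ⨯₃ v = u ⨯₃ v := by
  rw [map_add, map_smul, LinearMap.add_apply, LinearMap.smul_apply, cross_self, smul_zero,
    add_zero]

lemma dotProduct_Bhat_self {B : ℝ → Fin 3 → ℝ} {t : ℝ} (ht : B t ≠ 0) :
    Bhat B t ⬝ᵥ Bhat B t = 1 := by
  have hn := norm3_pos ht
  simp only [Bhat, smul_dotProduct, dotProduct_smul, smul_eq_mul, ← norm3_sq]
  field_simp

lemma cross3_Da_Bhat {B : ℝ → Fin 3 → ℝ} {t : ℝ} (ht : B t ≠ 0) :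
    cross3 (Da B t) (Bhat B t) =
      (norm3 (B t))⁻¹ • (deriv B t - (Bhat B t ⬝ᵥ deriv B t) • Bhat B t) := by
  rw [cross3, Da, cross_add_smul_self, χa, cross3, map_smul, LinearMap.smul_apply,
    cross_cross_self_of_dotProduct_self_eq_one (dotProduct_Bhat_self ht)]

theorem alignment_dynamics_first_general (B : ℝ → Fin 3 → ℝ)
    (hB : Differentiable ℝ B)
    (hne : ∀ t, B t ≠ 0) (t : ℝ) :
    HasDerivAt (fun s => Bhat B s) (cross3 (Da B t) (Bhat B t)) t := by
  rw [cross3_Da_Bhat (hne t)]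
  exact hasDerivAt_inv_norm3_smul (hB t).hasDerivAt (hne t)

/-- **Alignment dynamics, first frame equation.** For a twice differentiable
nonvanishing curve `B` with nonvanishing swing rate `χ_a`, the unit vector `B̂`
satisfies `(d/dt) B̂ = D_a × B̂`, where `D_a := χ_a + (c_b/|χ_a|) B̂` is the Darboux
angular velocity vector. -/
theorem alignment_dynamics_first (B : ℝ → Fin 3 → ℝ)
    (hB : Differentiable ℝ B) (hB' : Differentiable ℝ (deriv B))
    (hne : ∀ t, B t ≠ 0) (hχ : ∀ t, χa B t ≠ 0) (t : ℝ) :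
    HasDerivAt (fun s => Bhat B s) (cross3 (Da B t) (Bhat B t)) t :=
  alignment_dynamics_first_general B hB hne t
end
end
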